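/- If X : [t₀, T) → M_n(ℝ) is differentiable and satisfies X'(t) + A(t)·X(t) + X(t)·B(t) = F(t), then the scalar function y(t) = det X(t) is differentiable and satisfies the linear ODE y'(t) + tr(A(t)+B(t))·y(t) = tr(adj(X(t))·F(t)) for all t in [t₀, T). -/

import Mathlib

/-!
By Jacobi's formula `(det X)' = tr (adj X · X')`, and the equation gives `X' = F - A X - X B`.
Since `adj X · X = X · adj X = det X · 1`, cyclicity of the trace turns `tr (adj X · A X)` and
`tr (adj X · X B)` into `det X · tr A` and `det X · tr B`.
Jacobi's formula itself comes from differentiating the Leibniz expansion of the determinant term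
by term: the product rule yields, for each column `i`, the determinant of `X` with its `i`-th
column replaced by that of `X'`, which is the `i`-th diagonal entry of `adj X · X'` by Cramer's rule.
-/

open Matrix

namespace Matrix

variable {m R : Type*} [Fintype m] [DecidableEq m] [CommRing R]

theorem det_updateCol_eq_sum_perm (M : Matrix m m R) (i : m) (v : m → R) :
    (M.updateCol i v).det =
      ∑ σ : Equiv.Perm m, Equiv.Perm.sign σ • (v (σ i) * ∏ j ∈ Finset.univ.erase i, M (σ j) j) := by
  rw [det_apply]
  refine Finset.sum_congr rfl fun σ _ => ?_
  rw [← Finset.mul_prod_erase _ _ (Finset.mem_univ i), updateCol_self,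
    Finset.prod_congr rfl fun j hj => updateCol_ne (Finset.ne_of_mem_erase hj)]

theorem trace_adjugate_mul (M N : Matrix m m R) :
    (M.adjugate * N).trace = ∑ i, (M.updateCol i fun k => N k i).det := by
  refine Finset.sum_congr rfl fun i _ => ?_
  rw [← cramer_apply, cramer_eq_adjugate_mulVec]
  rfl

theorem trace_adjugate_mul_mul_self (M N : Matrix m m R) :
    (M.adjugate * (N * M)).trace = M.det * N.trace := by
  rw [← Matrix.mul_assoc, trace_mul_cycle, mul_adjugate, smul_mul, trace_smul, Matrix.one_mul,
    smul_eq_mul]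

theorem trace_adjugate_mul_self_mul (M N : Matrix m m R) :
    (M.adjugate * (M * N)).trace = M.det * N.trace := by
  rw [← Matrix.mul_assoc, adjugate_mul, smul_mul, trace_smul, Matrix.one_mul, smul_eq_mul]

end Matrix

variable {m 𝕜 : Type*} [Fintype m] [DecidableEq m] [NontriviallyNormedField 𝕜]

theorem hasDerivAt_det {X X' : 𝕜 → Matrix m m 𝕜} {t : 𝕜}
    (hX : ∀ i j, HasDerivAt (fun s => X s i j) (X' t i j) t) :
    HasDerivAt (fun s => (X s).det) ((X t).adjugate * X' t).trace t := by
  have hLeibniz : HasDerivAt (fun s => ∑ σ : Equiv.Perm m, Equiv.Perm.sign σ • ∏ i, X s (σ i) i)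
      (∑ σ : Equiv.Perm m, Equiv.Perm.sign σ •
        ∑ i, (∏ j ∈ Finset.univ.erase i, X t (σ j) j) * X' t (σ i) i) t :=
    HasDerivAt.fun_sum fun σ _ => (HasDerivAt.fun_finsetProd fun i _ => hX (σ i) i).const_smul _
  simp only [← det_apply] at hLeibniz
  convert hLeibniz using 1
  simp only [trace_adjugate_mul, det_updateCol_eq_sum_perm, Finset.smul_sum]
  rw [Finset.sum_comm]
  simp only [mul_comm]

theorem stmt_3_general {n : ℕ} (t₀ T : ℝ) (X X' A B F : ℝ → Matrix (Fin n) (Fin n) ℝ)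
    (hX : ∀ t ∈ Set.Ico t₀ T, ∀ i j, HasDerivAt (fun s => X s i j) (X' t i j) t)
    (hODE : ∀ t ∈ Set.Ico t₀ T, X' t + A t * X t + X t * B t = F t) :
    ∀ t ∈ Set.Ico t₀ T,
      HasDerivAt (fun s => (X s).det)
        (((X t).adjugate * F t).trace - (A t + B t).trace * (X t).det) t := by
  intro t ht
  refine (hasDerivAt_det (hX t ht)).congr_deriv ?_
  rw [← hODE t ht, Matrix.mul_add, Matrix.mul_add, trace_add, trace_add,
    trace_adjugate_mul_mul_self, trace_adjugate_mul_self_mul, trace_add]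
  ring

theorem stmt_3 {n : ℕ} (t₀ T : ℝ) (X X' A B F : ℝ → Matrix (Fin n) (Fin n) ℝ)
    (hA : ContinuousOn A (Set.Ico t₀ T)) (hB : ContinuousOn B (Set.Ico t₀ T))
    (hF : ContinuousOn F (Set.Ico t₀ T))
    (hX : ∀ t ∈ Set.Ico t₀ T, ∀ i j, HasDerivAt (fun s => X s i j) (X' t i j) t)
    (hODE : ∀ t ∈ Set.Ico t₀ T, X' t + A t * X t + X t * B t = F t) :
    ∀ t ∈ Set.Ico t₀ T,
      HasDerivAt (fun s => (X s).det)
        (((X t).adjugate * F t).trace - (A t + B t).trace * (X t).det) t :=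
  stmt_3_general t₀ T X X' A B F hX hODE
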